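/- arXiv:1704.02267 — 2 statements merged into one kernel-verified Lean document; each statement's English description precedes it below -/
import Mathlib

section
/- The TBT matrix T satisfies the matrix identity A_2 T − T A_2^* = i·(M_{12} M_{22} + M_{32} M_{42}). -/
open Matrix

noncomputable section

/-- The scalar sequence `a_r`: `0` for `r < 0`, `i/2` for `r = 0`, `i` for `r > 0`. -/
def aC (r : ℤ) : ℂ := if r < 0 then 0 else if r = 0 then Complex.I / 2 else Complex.I

/-- `A_1`: block matrix `{𝒜_{1,p−q}}` with blocks `0`, `(i/2)I_m`, `i·I_m`. -/
def A1 (m n : ℕ) : Matrix (Fin n × Fin m) (Fin n × Fin m) ℂ :=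
  Matrix.of fun r c => if r.2 = c.2 then aC (((r.1 : ℕ) : ℤ) - ((c.1 : ℕ) : ℤ)) else 0

/-- `A_2 = diag{𝒜_{2,0}, …, 𝒜_{2,0}}`. -/
def A2 (m n : ℕ) : Matrix (Fin n × Fin m) (Fin n × Fin m) ℂ :=
  Matrix.of fun r c => if r.1 = c.1 then aC (((r.2 : ℕ) : ℤ) - ((c.2 : ℕ) : ℤ)) else 0

/-- `𝒜_1 = {a_{j−ℓ}}_{j,ℓ=1}^n`. -/
def calA1 (n : ℕ) : Matrix (Fin n) (Fin n) ℂ :=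
  Matrix.of fun p q => aC (((p : ℕ) : ℤ) - ((q : ℕ) : ℤ))

/-- `𝒜_2 = {a_{j−ℓ}}_{j,ℓ=1}^m`. -/
def calA2 (m : ℕ) : Matrix (Fin m) (Fin m) ℂ :=
  Matrix.of fun j l => aC (((j : ℕ) : ℤ) - ((l : ℕ) : ℤ))

/-- The Toeplitz-block Toeplitz matrix `T`, entry `t_{p−q}^{(j−ℓ)}`. -/
def TBT (m n : ℕ) (t : ℤ → ℤ → ℂ) : Matrix (Fin n × Fin m) (Fin n × Fin m) ℂ :=
  Matrix.of fun r c =>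
    t (((r.1 : ℕ) : ℤ) - ((c.1 : ℕ) : ℤ)) (((r.2 : ℕ) : ℤ) - ((c.2 : ℕ) : ℤ))

/-- `M_{11}`: block column, `p`-th block `(1/2)𝒯_0 + Σ_{s=1}^{p−1} 𝒯_s`. -/
def M11 (m n : ℕ) (t : ℤ → ℤ → ℂ) : Matrix (Fin n × Fin m) (Fin m) ℂ :=
  Matrix.of fun r l => (1 / 2 : ℂ) * t 0 (((r.2 : ℕ) : ℤ) - ((l : ℕ) : ℤ))
    + ∑ s ∈ Finset.range (r.1 : ℕ), t ((s : ℤ) + 1) (((r.2 : ℕ) : ℤ) - ((l : ℕ) : ℤ))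

/-- `M_{21} = [I_m I_m … I_m]`. -/
def M21 (m n : ℕ) : Matrix (Fin m) (Fin n × Fin m) ℂ :=
  Matrix.of fun j c => if j = c.2 then 1 else 0

/-- `M_{31} = M_{21}^*`. -/
def M31 (m n : ℕ) : Matrix (Fin n × Fin m) (Fin m) ℂ := (M21 m n)ᴴ

/-- `M_{41}`: block row, `q`-th block `(1/2)𝒯_0 + Σ_{s=1}^{q−1} 𝒯_{−s}`. -/
def M41 (m n : ℕ) (t : ℤ → ℤ → ℂ) : Matrix (Fin m) (Fin n × Fin m) ℂ :=
  Matrix.of fun j c => (1 / 2 : ℂ) * t 0 (((j : ℕ) : ℤ) - ((c.2 : ℕ) : ℤ))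
    + ∑ s ∈ Finset.range (c.1 : ℕ), t (-((s : ℤ) + 1)) (((j : ℕ) : ℤ) - ((c.2 : ℕ) : ℤ))

/-- `j`-th entry of the column `ℳ_{12}^{(r)}`. -/
def m12e (m : ℕ) (t : ℤ → ℤ → ℂ) (r : ℤ) (j : Fin m) : ℂ :=
  (1 / 2 : ℂ) * t r 0 + ∑ s ∈ Finset.range (j : ℕ), t r ((s : ℤ) + 1)

/-- `ℓ`-th entry of the row `ℳ_{42}^{(r)}`. -/
def m42e (m : ℕ) (t : ℤ → ℤ → ℂ) (r : ℤ) (l : Fin m) : ℂ :=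
  (1 / 2 : ℂ) * t r 0 + ∑ s ∈ Finset.range (l : ℕ), t r (-((s : ℤ) + 1))

/-- `M_{12} = {ℳ_{12}^{(p−q)}}`. -/
def M12 (m n : ℕ) (t : ℤ → ℤ → ℂ) : Matrix (Fin n × Fin m) (Fin n) ℂ :=
  Matrix.of fun r q => m12e m t (((r.1 : ℕ) : ℤ) - ((q : ℕ) : ℤ)) r.2

/-- `M_{22}`. -/
def M22 (m n : ℕ) : Matrix (Fin n) (Fin n × Fin m) ℂ :=
  Matrix.of fun p c => if p = c.1 then 1 else 0

/-- `M_{32} = M_{22}^*`. -/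
def M32 (m n : ℕ) : Matrix (Fin n × Fin m) (Fin n) ℂ := (M22 m n)ᴴ

/-- `M_{42} = {ℳ_{42}^{(p−q)}}`. -/
def M42 (m n : ℕ) (t : ℤ → ℤ → ℂ) : Matrix (Fin n) (Fin n × Fin m) ℂ :=
  Matrix.of fun p c => m42e m t (((p : ℕ) : ℤ) - ((c.1 : ℕ) : ℤ)) c.2

/-- `K`: the `1×mn` row, `q`-th block `(1/2)ℳ_{42}^{(0)} + Σ_{s=1}^{q−1} ℳ_{42}^{(−s)}`. -/
def Krow (m n : ℕ) (t : ℤ → ℤ → ℂ) : (Fin n × Fin m) → ℂ :=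
  fun c => (1 / 2 : ℂ) * m42e m t 0 c.2
    + ∑ s ∈ Finset.range (c.1 : ℕ), m42e m t (-((s : ℤ) + 1)) c.2

/-- `K_{11}`: `p`-th row `(1/2)ℳ_{42}^{(0)} + Σ_{s=1}^{p−1} ℳ_{42}^{(s)}`. -/
def K11 (m n : ℕ) (t : ℤ → ℤ → ℂ) : Matrix (Fin n) (Fin m) ℂ :=
  Matrix.of fun p l => (1 / 2 : ℂ) * m42e m t 0 l
    + ∑ s ∈ Finset.range (p : ℕ), m42e m t ((s : ℤ) + 1) l

/-- `K_{12}`: `q`-th column `(1/2)ℳ_{12}^{(0)} + Σ_{s=1}^{q−1} ℳ_{12}^{(−s)}`. -/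
def K12 (m n : ℕ) (t : ℤ → ℤ → ℂ) : Matrix (Fin m) (Fin n) ℂ :=
  Matrix.of fun j q => (1 / 2 : ℂ) * m12e m t 0 j
    + ∑ s ∈ Finset.range (q : ℕ), m12e m t (-((s : ℤ) + 1)) j

/-- `Π_1 = [M_{11} M_{31}]`. -/
def Pi1 (m n : ℕ) (t : ℤ → ℤ → ℂ) : Matrix (Fin n × Fin m) (Fin m ⊕ Fin m) ℂ :=
  fromCols (M11 m n t) (M31 m n)

/-- `Π_2 = [M_{12} M_{32}]`. -/
def Pi2 (m n : ℕ) (t : ℤ → ℤ → ℂ) : Matrix (Fin n × Fin m) (Fin n ⊕ Fin n) ℂ :=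
  fromCols (M12 m n t) (M32 m n)

/-- `Π̂_1 = col[M_{21}; M_{41}]`. -/
def PiHat1 (m n : ℕ) (t : ℤ → ℤ → ℂ) : Matrix (Fin m ⊕ Fin m) (Fin n × Fin m) ℂ :=
  fromRows (M21 m n) (M41 m n t)

/-- `Π̂_2 = col[M_{22}; M_{42}]`. -/
def PiHat2 (m n : ℕ) (t : ℤ → ℤ → ℂ) : Matrix (Fin n ⊕ Fin n) (Fin n × Fin m) ℂ :=
  fromRows (M22 m n) (M42 m n t)

/-- All-ones vector. -/
def onesV (k : Type*) : k → ℂ := fun _ => 1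

/-- `g_{12} = i·Π̂_1 T^{-1} Π_2 − i·[[𝟏_m 𝟏_n^*, 0],[K_{12}, 0]]`. -/
def g12M (m n : ℕ) (t : ℤ → ℤ → ℂ) : Matrix (Fin m ⊕ Fin m) (Fin n ⊕ Fin n) ℂ :=
  Complex.I • (PiHat1 m n t * (TBT m n t)⁻¹ * Pi2 m n t)
    - Complex.I • fromBlocks (vecMulVec (onesV (Fin m)) (onesV (Fin n))) 0 (K12 m n t) 0

/-- `g_{21} = i·Π̂_2 T^{-1} Π_1 − i·[[𝟏_n 𝟏_m^*, 0],[K_{11}, 0]]`. -/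
def g21M (m n : ℕ) (t : ℤ → ℤ → ℂ) : Matrix (Fin n ⊕ Fin n) (Fin m ⊕ Fin m) ℂ :=
  Complex.I • (PiHat2 m n t * (TBT m n t)⁻¹ * Pi1 m n t)
    - Complex.I • fromBlocks (vecMulVec (onesV (Fin n)) (onesV (Fin m))) 0 (K11 m n t) 0

/-- The `k×k` flip (anti-diagonal) matrix. -/
def flipU (k : ℕ) : Matrix (Fin k) (Fin k) ℂ :=
  Matrix.of fun p q => if (p : ℕ) + (q : ℕ) + 1 = k then 1 else 0

/-- `U_{2k}`, the `2k×2k` flip matrix on the sum type. -/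
def U2 (k : ℕ) : Matrix (Fin k ⊕ Fin k) (Fin k ⊕ Fin k) ℂ :=
  fromBlocks 0 (flipU k) (flipU k) 0

/-- `J_{2k} = diag{I_k, −I_k}`. -/
def J2 (k : ℕ) : Matrix (Fin k ⊕ Fin k) (Fin k ⊕ Fin k) ℂ :=
  fromBlocks 1 0 0 (-1)

/-- `U = U_{mn}`, the `mn×mn` flip matrix (global index `m·p + j`). -/
def UmnM (m n : ℕ) : Matrix (Fin n × Fin m) (Fin n × Fin m) ℂ :=
  Matrix.of fun r c =>
    if m * (r.1 : ℕ) + (r.2 : ℕ) + (m * (c.1 : ℕ) + (c.2 : ℕ)) + 1 = m * n then 1 else 0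

/-- `ψ(λ) = (λ + i/2)/(λ − i/2)`. -/
def psiM (l : ℂ) : ℂ := (l + Complex.I / 2) / (l - Complex.I / 2)

/-- `h(y_1, y_2)`, entry `y_1^{p−1} y_2^{j−1}`. -/
def hVec (m n : ℕ) (y1 y2 : ℂ) : (Fin n × Fin m) → ℂ :=
  fun r => y1 ^ (r.1 : ℕ) * y2 ^ (r.2 : ℕ)

/-- `ω(λ,μ) = 𝟏^*(A_1^*−μ_1)^{-1}(A_2^*−μ_2)^{-1}T^{-1}(A_2−λ_2)^{-1}(A_1−λ_1)^{-1}𝟏`. -/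
def omegaF (m n : ℕ) (t : ℤ → ℤ → ℂ) (l1 l2 u1 u2 : ℂ) : ℂ :=
  star (onesV (Fin n × Fin m)) ⬝ᵥ
    ((((A1 m n)ᴴ - u1 • 1)⁻¹ * ((A2 m n)ᴴ - u2 • 1)⁻¹ * (TBT m n t)⁻¹ *
      (A2 m n - l2 • 1)⁻¹ * (A1 m n - l1 • 1)⁻¹) *ᵥ onesV (Fin n × Fin m))

/-- `ρ(y,z) = h(conj z_1, conj z_2)^* T^{-1} h(y_1,y_2)`. -/
def rhoF (m n : ℕ) (t : ℤ → ℤ → ℂ) (y1 y2 z1 z2 : ℂ) : ℂ :=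
  star (hVec m n ((starRingEnd ℂ) z1) ((starRingEnd ℂ) z2)) ⬝ᵥ
    ((TBT m n t)⁻¹ *ᵥ hVec m n y1 y2)

/-- `Γ_1 = T^{-1}Π_1`. -/
def Gam1 (m n : ℕ) (t : ℤ → ℤ → ℂ) : Matrix (Fin n × Fin m) (Fin m ⊕ Fin m) ℂ :=
  (TBT m n t)⁻¹ * Pi1 m n t

/-- `Γ_2 = T^{-1}Π_2`. -/
def Gam2 (m n : ℕ) (t : ℤ → ℤ → ℂ) : Matrix (Fin n × Fin m) (Fin n ⊕ Fin n) ℂ :=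
  (TBT m n t)⁻¹ * Pi2 m n t

/-- `Γ̂_1 = Π̂_1 T^{-1}`. -/
def GamHat1 (m n : ℕ) (t : ℤ → ℤ → ℂ) : Matrix (Fin m ⊕ Fin m) (Fin n × Fin m) ℂ :=
  PiHat1 m n t * (TBT m n t)⁻¹

/-- `Γ̂_2 = Π̂_2 T^{-1}`. -/
def GamHat2 (m n : ℕ) (t : ℤ → ℤ → ℂ) : Matrix (Fin n ⊕ Fin n) (Fin n × Fin m) ℂ :=
  PiHat2 m n t * (TBT m n t)⁻¹

/-- `Γ = [Γ_1 Γ_2]`. -/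
def GammaFull (m n : ℕ) (t : ℤ → ℤ → ℂ) :
    Matrix (Fin n × Fin m) ((Fin m ⊕ Fin m) ⊕ (Fin n ⊕ Fin n)) ℂ :=
  fromCols (Gam1 m n t) (Gam2 m n t)

/-- `Γ̂ = col[Γ̂_1; Γ̂_2]`. -/
def GammaHatFull (m n : ℕ) (t : ℤ → ℤ → ℂ) :
    Matrix ((Fin m ⊕ Fin m) ⊕ (Fin n ⊕ Fin n)) (Fin n × Fin m) ℂ :=
  fromRows (GamHat1 m n t) (GamHat2 m n t)

/-- The row vector `u(μ)`. -/
def uRow (m n : ℕ) (t : ℤ → ℤ → ℂ) (u1 u2 : ℂ) :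
    ((Fin m ⊕ Fin m) ⊕ (Fin n ⊕ Fin n)) → ℂ :=
  star (onesV (Fin n × Fin m)) ᵥ*
      (((A1 m n)ᴴ - u1 • 1)⁻¹ * ((A2 m n)ᴴ - u2 • 1)⁻¹ * GammaFull m n t)
    - Complex.I • Sum.elim
        (Sum.elim (star (onesV (Fin m)) ᵥ* ((calA2 m)ᴴ - u2 • 1)⁻¹) (0 : Fin m → ℂ))
        (Sum.elim (star (onesV (Fin n)) ᵥ* ((calA1 n)ᴴ - u1 • 1)⁻¹) (0 : Fin n → ℂ))

/-- The column vector `û(λ)`. -/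
def uHatCol (m n : ℕ) (t : ℤ → ℤ → ℂ) (l1 l2 : ℂ) :
    ((Fin m ⊕ Fin m) ⊕ (Fin n ⊕ Fin n)) → ℂ :=
  (GammaHatFull m n t * (A2 m n - l2 • 1)⁻¹ * (A1 m n - l1 • 1)⁻¹) *ᵥ onesV (Fin n × Fin m)
    + Complex.I • Sum.elim
        (Sum.elim (0 : Fin m → ℂ) ((calA2 m - l2 • 1)⁻¹ *ᵥ onesV (Fin m)))
        (Sum.elim (0 : Fin n → ℂ) ((calA1 n - l1 • 1)⁻¹ *ᵥ onesV (Fin n)))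

/-- `P_1 = diag{I_{2m}, 0}`. -/
def P1M (m n : ℕ) :
    Matrix ((Fin m ⊕ Fin m) ⊕ (Fin n ⊕ Fin n)) ((Fin m ⊕ Fin m) ⊕ (Fin n ⊕ Fin n)) ℂ :=
  fromBlocks 1 0 0 0

/-- `P_2 = I − P_1`. -/
def P2M (m n : ℕ) :
    Matrix ((Fin m ⊕ Fin m) ⊕ (Fin n ⊕ Fin n)) ((Fin m ⊕ Fin m) ⊕ (Fin n ⊕ Fin n)) ℂ :=
  1 - P1M m n

/-- `G(λ)`, built from `g_{12}` and `g_{21}`. -/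
def GMat (m n : ℕ) (g12 : Matrix (Fin m ⊕ Fin m) (Fin n ⊕ Fin n) ℂ)
    (g21 : Matrix (Fin n ⊕ Fin n) (Fin m ⊕ Fin m) ℂ) (l1 l2 : ℂ) :
    Matrix ((Fin m ⊕ Fin m) ⊕ (Fin n ⊕ Fin n)) ((Fin m ⊕ Fin m) ⊕ (Fin n ⊕ Fin n)) ℂ :=
  fromBlocks (fromBlocks (calA2 m - l2 • 1) 0 0 (calA2 m - l2 • 1)) g12
             g21 (fromBlocks (calA1 n - l1 • 1) 0 0 (calA1 n - l1 • 1))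

/-- `G` as a matrix over the polynomial ring `ℂ[λ_1, λ_2]` (variables `X 0 = λ_1`, `X 1 = λ_2`). -/
def GPoly (m n : ℕ) (g12 : Matrix (Fin m ⊕ Fin m) (Fin n ⊕ Fin n) ℂ)
    (g21 : Matrix (Fin n ⊕ Fin n) (Fin m ⊕ Fin m) ℂ) :
    Matrix ((Fin m ⊕ Fin m) ⊕ (Fin n ⊕ Fin n)) ((Fin m ⊕ Fin m) ⊕ (Fin n ⊕ Fin n))
      (MvPolynomial (Fin 2) ℂ) :=
  fromBlocks
    (fromBlocks ((calA2 m).map MvPolynomial.C - (MvPolynomial.X 1 : MvPolynomial (Fin 2) ℂ) • 1) 0 0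
      ((calA2 m).map MvPolynomial.C - (MvPolynomial.X 1 : MvPolynomial (Fin 2) ℂ) • 1))
    (g12.map MvPolynomial.C)
    (g21.map MvPolynomial.C)
    (fromBlocks ((calA1 n).map MvPolynomial.C - (MvPolynomial.X 0 : MvPolynomial (Fin 2) ℂ) • 1) 0 0
      ((calA1 n).map MvPolynomial.C - (MvPolynomial.X 0 : MvPolynomial (Fin 2) ℂ) • 1))

/-- The vector `col[0_m; 𝟏_m; 0_n; 𝟏_n]`. -/
def eVec (m n : ℕ) : ((Fin m ⊕ Fin m) ⊕ (Fin n ⊕ Fin n)) → ℂ :=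
  Sum.elim (Sum.elim (0 : Fin m → ℂ) (onesV (Fin m))) (Sum.elim (0 : Fin n → ℂ) (onesV (Fin n)))

/-- `diag{J_{2m}U_{2m}, J_{2n}U_{2n}}`. -/
def DJU (m n : ℕ) :
    Matrix ((Fin m ⊕ Fin m) ⊕ (Fin n ⊕ Fin n)) ((Fin m ⊕ Fin m) ⊕ (Fin n ⊕ Fin n)) ℂ :=
  fromBlocks (J2 m * U2 m) 0 0 (J2 n * U2 n)

/-- The block column `col[I_m; I_m; …; I_m]`. -/
def EcolId (m n : ℕ) : Matrix (Fin n × Fin m) (Fin m) ℂ :=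
  Matrix.of fun r l => if r.2 = l then 1 else 0

/-!
`A₂` is block diagonal with diagonal block the lower triangular Toeplitz matrix `𝒜 = 𝒜_{2,0}`, so
the identity holds block by block: `𝒜 𝒯_r − 𝒯_r 𝒜^* = i (ℳ₁₂^{(r)} 𝟏^* + 𝟏 ℳ₄₂^{(r)})`. As the
entries of `𝒜` are purely imaginary, `𝒜^* = −𝒜ᵀ`, and entry `(j, ℓ)` of the left side becomes
`i (t^{(j−ℓ)} + ∑_{s<j} t^{(s−ℓ)} + ∑_{s<ℓ} t^{(j−s)})`. This and the right side are two ways of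
splitting the window sum `∑_{k=−ℓ}^{j} t^{(k)}`.
-/

open Finset

def toeplitz (m : ℕ) (f : ℤ → ℂ) : Matrix (Fin m) (Fin m) ℂ :=
  Matrix.of fun j l => f (((j : ℕ) : ℤ) - ((l : ℕ) : ℤ))

lemma star_aC (r : ℤ) : star (aC r) = -aC r := by
  unfold aC
  split_ifs <;> simp [Complex.conj_I, neg_div]

lemma conjTranspose_calA2 (m : ℕ) : (calA2 m)ᴴ = -(calA2 m)ᵀ := by
  ext j l
  simp [calA2, star_aC]

lemma sum_aC_sub_mul {m : ℕ} (j : Fin m) (g : ℕ → ℂ) :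
    ∑ s : Fin m, aC (((j : ℕ) : ℤ) - ((s : ℕ) : ℤ)) * g s
      = Complex.I / 2 * g j + Complex.I * ∑ s ∈ range j, g s := by
  rw [Fin.sum_univ_eq_sum_range (fun s : ℕ => aC ((j : ℤ) - (s : ℤ)) * g s),
    ← sum_subset (range_subset_range.mpr j.2), sum_range_succ, sub_self,
    show aC 0 = Complex.I / 2 by simp [aC], mul_sum, add_comm]
  · congr 1
    refine sum_congr rfl fun s hs => ?_
    have : ¬ ((j : ℤ) - s < 0) ∧ (j : ℤ) - s ≠ 0 := by simp at hs; omega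
    simp [aC, this]
  · intro s hs hjs
    have : (j : ℤ) - s < 0 := by simp at hs hjs; omega
    simp [aC, this]

lemma add_sum_range_sub_eq {M : Type*} [AddCommMonoid M] (f : ℤ → M) (j l : ℕ) :
    f ((j : ℤ) - l) + ∑ s ∈ range j, f ((s : ℤ) - l) + ∑ s ∈ range l, f ((j : ℤ) - s)
      = f 0 + ∑ s ∈ range j, f ((s : ℤ) + 1) + ∑ s ∈ range l, f (-((s : ℤ) + 1)) := by
  have split_at_j : ∑ k ∈ range ((j + 1) + l), f ((k : ℤ) - l)
      = ∑ s ∈ range j, f ((s : ℤ) - l) + f ((j : ℤ) - l) + ∑ s ∈ range l, f ((j : ℤ) - s) := by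
    rw [sum_range_add, sum_range_succ, ← sum_range_reflect _ l]
    refine congrArg _ (sum_congr rfl fun s hs => congrArg f ?_)
    simp at hs; omega
  have split_at_zero : ∑ k ∈ range (l + (j + 1)), f ((k : ℤ) - l)
      = ∑ s ∈ range l, f (-((s : ℤ) + 1)) + (f 0 + ∑ s ∈ range j, f ((s : ℤ) + 1)) := by
    rw [sum_range_add, sum_range_succ', ← sum_range_reflect _ l]
    congr 1
    · refine sum_congr rfl fun s hs => congrArg f ?_
      simp at hs; omega
    · rw [add_comm]
      congr 1
      · simp
      · refine sum_congr rfl fun s _ => congrArg f ?_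
        push_cast; ring
  rw [add_comm (f ((j : ℤ) - l)), ← split_at_j, add_comm (j + 1) l, split_at_zero, add_comm]

lemma calA2_mul_toeplitz_sub (m : ℕ) (t : ℤ → ℤ → ℂ) (r : ℤ) :
    calA2 m * toeplitz m (t r) - toeplitz m (t r) * (calA2 m)ᴴ
      = Complex.I • (vecMulVec (m12e m t r) (onesV (Fin m))
          + vecMulVec (onesV (Fin m)) (m42e m t r)) := by
  rw [conjTranspose_calA2, Matrix.mul_neg, sub_neg_eq_add]
  ext j l
  have h1 := sum_aC_sub_mul j (fun s => t r ((s : ℤ) - l))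
  have h2 := sum_aC_sub_mul l (fun s => t r ((j : ℤ) - s))
  simp only [Matrix.add_apply, Matrix.mul_apply, Matrix.transpose_apply, calA2, toeplitz,
    Matrix.of_apply, Matrix.smul_apply, vecMulVec_apply, onesV, m12e, m42e, smul_eq_mul]
  simp only [mul_comm (t r _) (aC _), h1, h2]
  linear_combination Complex.I * add_sum_range_sub_eq (t r) j l

lemma A2_eq_comp (m n : ℕ) :
    A2 m n = comp (Fin n) (Fin n) (Fin m) (Fin m) ℂ (diagonal fun _ => calA2 m) := by
  ext ⟨p, j⟩ ⟨q, l⟩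
  by_cases h : p = q <;> simp [A2, calA2, h]

lemma conjTranspose_A2_eq_comp (m n : ℕ) :
    (A2 m n)ᴴ = comp (Fin n) (Fin n) (Fin m) (Fin m) ℂ (diagonal fun _ => (calA2 m)ᴴ) := by
  ext ⟨p, j⟩ ⟨q, l⟩
  by_cases h : p = q <;> simp [A2, calA2, h, eq_comm]

lemma TBT_eq_comp (m n : ℕ) (t : ℤ → ℤ → ℂ) :
    TBT m n t = comp (Fin n) (Fin n) (Fin m) (Fin m) ℂ
      (of fun p q => toeplitz m (t (((p : ℕ) : ℤ) - ((q : ℕ) : ℤ)))) :=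
  rfl

lemma A2_mul_TBT_sub_eq_comp (m n : ℕ) (t : ℤ → ℤ → ℂ) :
    A2 m n * TBT m n t - TBT m n t * (A2 m n)ᴴ
      = comp (Fin n) (Fin n) (Fin m) (Fin m) ℂ (of fun p q =>
          calA2 m * toeplitz m (t (((p : ℕ) : ℤ) - ((q : ℕ) : ℤ)))
            - toeplitz m (t (((p : ℕ) : ℤ) - ((q : ℕ) : ℤ))) * (calA2 m)ᴴ) := by
  rw [conjTranspose_A2_eq_comp, A2_eq_comp, TBT_eq_comp]
  simp only [← compRingEquiv_apply, ← map_mul, ← map_sub]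
  congr 1
  ext p q : 2
  simp [diagonal_mul, mul_diagonal]

lemma M12_mul_M22_apply (m n : ℕ) (t : ℤ → ℤ → ℂ) (p q : Fin n) (j l : Fin m) :
    (M12 m n t * M22 m n) (p, j) (q, l) = m12e m t (((p : ℕ) : ℤ) - ((q : ℕ) : ℤ)) j := by
  simp [M12, M22, mul_apply]

lemma M32_mul_M42_apply (m n : ℕ) (t : ℤ → ℤ → ℂ) (p q : Fin n) (j l : Fin m) :
    (M32 m n * M42 m n t) (p, j) (q, l) = m42e m t (((p : ℕ) : ℤ) - ((q : ℕ) : ℤ)) l := by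
  simp [M32, M42, M22, mul_apply]

theorem tbt_identity_A2_general (m n : ℕ) (t : ℤ → ℤ → ℂ) :
    A2 m n * TBT m n t - TBT m n t * (A2 m n)ᴴ
      = Complex.I • (M12 m n t * M22 m n + M32 m n * M42 m n t) := by
  ext ⟨p, j⟩ ⟨q, l⟩
  rw [A2_mul_TBT_sub_eq_comp, comp_apply, of_apply, calA2_mul_toeplitz_sub]
  simp [M12_mul_M22_apply, M32_mul_M42_apply, vecMulVec_apply, onesV]

/-- `A_2 T − T A_2^* = i(M_{12}M_{22} + M_{32}M_{42})`. -/
theorem tbt_identity_A2 (m n : ℕ) (hm : 0 < m) (hn : 0 < n) (t : ℤ → ℤ → ℂ) :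
    A2 m n * TBT m n t - TBT m n t * (A2 m n)ᴴ
      = Complex.I • (M12 m n t * M22 m n + M32 m n * M42 m n t) :=
  tbt_identity_A2_general m n t

end
end

section
/- For all complex λ1 ≠ i/2 and λ2 ≠ i/2, the matrices A_1 − λ1·I and A_2 − λ2·I are invertible and (i/2 − λ2)(i/2 − λ1)·(A_2 − λ2 I)^{-1}(A_1 − λ1 I)^{-1}·𝟏 = h(ψ(λ1), ψ(λ2)), where ψ(λ) = (λ + i/2)/(λ − i/2). -/
open Matrix

noncomputable section

/-! Write `𝒜 = calA1 N` for the lower-triangular Toeplitz matrix with `i/2` on the diagonal and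
`i` below it. Then `A₁ - λ₁ = (𝒜 - λ₁) ⊗ I_m` and `A₂ - λ₂ = I_n ⊗ (𝒜 - λ₂)`, both invertible since
`𝒜 - λ` is triangular with diagonal `i/2 - λ`, and `h(y₁, y₂)` is the Kronecker product of the power
vectors of `y₁` and `y₂`. Because `ψ(λ)(λ - i/2) = λ + i/2`, each row of `(𝒜 - λ)(ψ(λ)^q)_q`
telescopes to `i/2 - λ`; hence `(A₁ - λ₁)(A₂ - λ₂) h(ψ(λ₁), ψ(λ₂)) = (i/2 - λ₁)(i/2 - λ₂) 𝟏`. -/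

section Toeplitz

open Complex

lemma aC_of_neg {r : ℤ} (h : r < 0) : aC r = 0 := by simp [aC, h]

lemma aC_zero : aC 0 = I / 2 := by simp [aC]

lemma aC_of_pos {r : ℤ} (h : 0 < r) : aC r = I := by
  simp [aC, h.not_gt, h.ne']

variable {N : ℕ}

lemma calA1_sub_smul_isLowerTriangular (l : ℂ) : (calA1 N - l • 1).IsLowerTriangular := by
  intro p q hpq
  have hpq' : (p : ℕ) < q := hpq
  have hne : p ≠ q := fun h => by simp [h] at hpq'
  simp [calA1, aC_of_neg (by omega : ((p : ℕ) : ℤ) - (q : ℕ) < 0), one_apply, hne]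

lemma det_calA1_sub_smul (l : ℂ) : (calA1 N - l • 1).det = (I / 2 - l) ^ N := by
  rw [det_of_isLowerTriangular _ (calA1_sub_smul_isLowerTriangular l)]
  simp [calA1, aC_zero]

lemma isUnit_calA1_sub_smul {l : ℂ} (hl : l ≠ I / 2) : IsUnit (calA1 N - l • 1) := by
  rw [isUnit_iff_isUnit_det, det_calA1_sub_smul, isUnit_iff_ne_zero]
  exact pow_ne_zero _ (sub_ne_zero.mpr hl.symm)

lemma sum_aC_mul_pow {p : ℕ} (hp : p < N) (x : ℂ) :
    ∑ q ∈ Finset.range N, aC ((p : ℤ) - q) * x ^ q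
      = I / 2 * x ^ p + I * ∑ q ∈ Finset.range p, x ^ q := by
  have hvanish : ∀ q ∈ Finset.range N, q ∉ Finset.range (p + 1) → aC ((p : ℤ) - q) * x ^ q = 0 :=
    fun q _ hq => by rw [aC_of_neg (by simp at hq; omega), zero_mul]
  rw [← Finset.sum_subset (Finset.range_subset_range.mpr hp) hvanish, Finset.sum_range_succ,
    sub_self, aC_zero, Finset.mul_sum,
    Finset.sum_congr rfl fun q hq => by rw [aC_of_pos (by simp at hq; omega)]]
  ring

lemma psiM_pow_geom_sum {l : ℂ} (hl : l ≠ I / 2) (p : ℕ) :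
    I / 2 * psiM l ^ p + I * ∑ q ∈ Finset.range p, psiM l ^ q - l * psiM l ^ p = I / 2 - l := by
  have hpsi : psiM l * (l - I / 2) = l + I / 2 := div_mul_cancel₀ _ (sub_ne_zero.mpr hl)
  induction p with
  | zero => simp
  | succ p ih =>
    rw [Finset.sum_range_succ]
    linear_combination ih - psiM l ^ p * hpsi

lemma calA1_sub_smul_mulVec_pow_psiM {l : ℂ} (hl : l ≠ I / 2) :
    (calA1 N - l • 1) *ᵥ (fun q : Fin N => psiM l ^ (q : ℕ)) = fun _ => I / 2 - l := by
  funext p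
  rw [sub_mulVec, smul_mulVec, one_mulVec]
  simp only [Pi.sub_apply, Pi.smul_apply, smul_eq_mul, mulVec, dotProduct, calA1, of_apply]
  rw [Fin.sum_univ_eq_sum_range (fun q => aC ((p : ℕ) - (q : ℤ)) * psiM l ^ q),
    sum_aC_mul_pow p.isLt]
  exact psiM_pow_geom_sum hl p

end Toeplitz

open scoped Kronecker

lemma kronecker_mulVec_mul {R l m n o : Type*} [CommSemiring R] [Fintype m] [Fintype o]
    (A : Matrix l m R) (B : Matrix n o R) (u : m → R) (v : o → R) :
    (A ⊗ₖ B) *ᵥ (fun i => u i.1 * v i.2) = fun i => (A *ᵥ u) i.1 * (B *ᵥ v) i.2 := by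
  funext i
  simp only [mulVec, dotProduct, kroneckerMap_apply, Fintype.sum_prod_type,
    Finset.sum_mul_sum]
  exact Finset.sum_congr rfl fun _ _ => Finset.sum_congr rfl fun _ _ => by ring

lemma A1_sub_smul_eq_kronecker (m n : ℕ) (l : ℂ) :
    A1 m n - l • 1 = (calA1 n - l • 1) ⊗ₖ (1 : Matrix (Fin m) (Fin m) ℂ) := by
  ext ⟨p, j⟩ ⟨q, k⟩
  by_cases hjk : j = k <;> by_cases hpq : p = q <;> simp [A1, calA1, one_apply, hjk, hpq]

lemma A2_sub_smul_eq_kronecker (m n : ℕ) (l : ℂ) :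
    A2 m n - l • 1 = (1 : Matrix (Fin n) (Fin n) ℂ) ⊗ₖ (calA1 m - l • 1) := by
  ext ⟨p, j⟩ ⟨q, k⟩
  by_cases hjk : j = k <;> by_cases hpq : p = q <;> simp [A2, calA1, one_apply, hjk, hpq]

lemma A1_sub_smul_mul_A2_sub_smul_mulVec_hVec (m n : ℕ) {l1 l2 : ℂ}
    (hl1 : l1 ≠ Complex.I / 2) (hl2 : l2 ≠ Complex.I / 2) :
    ((A1 m n - l1 • 1) * (A2 m n - l2 • 1)) *ᵥ hVec m n (psiM l1) (psiM l2)
      = ((Complex.I / 2 - l2) * (Complex.I / 2 - l1)) • onesV (Fin n × Fin m) := by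
  have hkron := kronecker_mulVec_mul (calA1 n - l1 • 1) (calA1 m - l2 • 1)
    (fun q : Fin n => psiM l1 ^ (q : ℕ)) (fun j : Fin m => psiM l2 ^ (j : ℕ))
  rw [A1_sub_smul_eq_kronecker, A2_sub_smul_eq_kronecker, ← mul_kronecker_mul, Matrix.mul_one,
    Matrix.one_mul]
  unfold hVec
  rw [hkron, calA1_sub_smul_mulVec_pow_psiM hl1, calA1_sub_smul_mulVec_pow_psiM hl2]
  funext r
  simp [onesV, mul_comm]

theorem resolvents_on_ones_general (m n : ℕ)
    (l1 l2 : ℂ) (hl1 : l1 ≠ Complex.I / 2) (hl2 : l2 ≠ Complex.I / 2) :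
    IsUnit (A1 m n - l1 • 1) ∧ IsUnit (A2 m n - l2 • 1) ∧
    ((Complex.I / 2 - l2) * (Complex.I / 2 - l1)) •
        (((A2 m n - l2 • 1)⁻¹ * (A1 m n - l1 • 1)⁻¹) *ᵥ onesV (Fin n × Fin m))
      = hVec m n (psiM l1) (psiM l2) := by
  have hu1 : IsUnit (A1 m n - l1 • 1) := by
    rw [A1_sub_smul_eq_kronecker]; exact (isUnit_calA1_sub_smul hl1).kronecker isUnit_one
  have hu2 : IsUnit (A2 m n - l2 • 1) := by
    rw [A2_sub_smul_eq_kronecker]; exact isUnit_one.kronecker (isUnit_calA1_sub_smul hl2)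
  refine ⟨hu1, hu2, ?_⟩
  rw [← Matrix.mul_inv_rev, ← mulVec_smul, ← A1_sub_smul_mul_A2_sub_smul_mulVec_hVec m n hl1 hl2,
    mulVec_mulVec, nonsing_inv_mul _ ((isUnit_iff_isUnit_det _).mp (hu1.mul hu2)), one_mulVec]

/-- `(i/2−λ_2)(i/2−λ_1)(A_2−λ_2 I)^{-1}(A_1−λ_1 I)^{-1}𝟏 = h(ψ(λ_1), ψ(λ_2))`. -/
theorem resolvents_on_ones (m n : ℕ) (hm : 0 < m) (hn : 0 < n)
    (l1 l2 : ℂ) (hl1 : l1 ≠ Complex.I / 2) (hl2 : l2 ≠ Complex.I / 2) :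
    IsUnit (A1 m n - l1 • 1) ∧ IsUnit (A2 m n - l2 • 1) ∧
    ((Complex.I / 2 - l2) * (Complex.I / 2 - l1)) •
        (((A2 m n - l2 • 1)⁻¹ * (A1 m n - l1 • 1)⁻¹) *ᵥ onesV (Fin n × Fin m))
      = hVec m n (psiM l1) (psiM l2) :=
  resolvents_on_ones_general m n l1 l2 hl1 hl2

end
end
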